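/- arXiv:1505.00064 — 3 statements merged into one kernel-verified Lean document; each statement's English description precedes it below -/
import Mathlib

section
/- Let 1 ≤ p < ∞, w = (w_n)_{n≥1} a bounded sequence of nonzero complex numbers, B_w the unilateral weighted backward shift on X = ℓ^p(ℕ, ℂ), F a filter family on ℕ, and integers 1 ≤ r₁ < r₂ < … < r_N (with r₀ = 0). Then the following are equivalent: (i) (B_w^{r₁}, …, B_w^{r_N}) is d-F, i.e. for all nonempty open U₀, U₁, …, U_N ⊆ X the set {k ∈ ℕ : B_w^{-r₁k}(U₁) ∩ … ∩ B_w^{-r_N k}(U_N) ∩ U₀ ≠ ∅} belongs to F; (ii) the direct sum operator ⊕_{0 ≤ s < l ≤ N} B_w^{r_l − r_s}, acting coordinatewise on X^{N(N+1)/2}, is an F-operator; (iii) for every M > 0, every j ∈ ℕ and all 0 ≤ s < l ≤ N, {m ∈ ℕ : ∏_{i=j+1}^{j+m(r_l−r_s)} |w_i| > M} ∈ F. -/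
open Filter Set
open scoped ENNReal
set_option linter.unusedSectionVars false
set_option synthInstance.maxHeartbeats 1000000
set_option maxHeartbeats 1000000

/-- The direct sum operator `⊕_{0 ≤ s < l ≤ N} B^{r_l − r_s}` acting coordinatewise on
`X^{N(N+1)/2}`, the product indexed by the pairs `0 ≤ s < l ≤ N`. -/
noncomputable def pairDirectSum {X : Type*} [AddCommGroup X] [Module ℂ X]
    [TopologicalSpace X] [IsTopologicalAddGroup X] [ContinuousSMul ℂ X]
    (B : X →L[ℂ] X) (N : ℕ) (rr : Fin (N + 1) → ℕ) :
    ({q : Fin (N + 1) × Fin (N + 1) // q.1 < q.2} → X) →L[ℂ]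
      ({q : Fin (N + 1) × Fin (N + 1) // q.1 < q.2} → X) :=
  ContinuousLinearMap.pi
    (fun q => (B ^ (rr q.1.2 - rr q.1.1)).comp (ContinuousLinearMap.proj q))

section Aux
variable (p : ℝ≥0∞) [Fact (1 ≤ p)] (hp : p ≠ ∞) (w : ℕ → ℂ)
  (hw0 : ∀ n : ℕ, 1 ≤ n → w n ≠ 0)

noncomputable def ee (j : ℕ) : lp (fun _ : ℕ => ℂ) p := lp.single p j 1
noncomputable def Wp (j m : ℕ) : ℂ := ∏ i ∈ Finset.Ioc j (j + m), w i

theorem p_ne_zero : p ≠ 0 := (lt_of_lt_of_le zero_lt_one Fact.out).ne'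

noncomputable def coev (j : ℕ) : lp (fun _ : ℕ => ℂ) p →L[ℂ] ℂ :=
  LinearMap.mkContinuous
    { toFun := fun f => f j
      map_add' := fun f g => by simp [lp.coeFn_add]
      map_smul' := fun c f => by simp [lp.coeFn_smul] }
    1 (fun f => by rw [one_mul]; exact lp.norm_apply_le_norm (p_ne_zero p) f j)

@[simp] theorem coev_apply (j : ℕ) (f : lp (fun _ : ℕ => ℂ) p) : coev p j f = f j := rfl

include hp in
theorem norm_ee (j : ℕ) : ‖ee p j‖ = 1 := by
  have hp' : 0 < p.toReal := ENNReal.toReal_pos (p_ne_zero p) hp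
  simpa [ee] using lp.norm_single (E := fun _ : ℕ => ℂ) (pos_iff_ne_zero.2 (p_ne_zero p)) j (1:ℂ)

theorem ee_apply (j i : ℕ) : (ee p j) i = if i = j then 1 else 0 := by
  by_cases h : i = j
  · subst h; simp [ee, lp.single_apply_self]
  · simp [ee, lp.single_apply_ne p j _ h, h]

theorem single_eq_smul_ee (j : ℕ) (c : ℂ) : lp.single p j c = c • ee p j := by
  rw [ee, ← lp.single_smul]; norm_num

variable (B : lp (fun _ : ℕ => ℂ) p →L[ℂ] lp (fun _ : ℕ => ℂ) p)
    (hB : ∀ n : ℕ, 1 ≤ n → B (lp.single p n 1) = w n • lp.single p (n - 1) 1)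
    (hB0 : B (lp.single p 0 1) = 0)

include hB in
theorem pow_ee (m j : ℕ) : (B ^ m) (ee p (j + m)) = Wp w j m • ee p j := by
  induction m with
  | zero => simp [Wp]
  | succ m ih =>
      rw [pow_succ]
      have h1 : B (ee p (j + (m+1))) = w (j+m+1) • ee p (j + m) := by
        have := hB (j + (m+1)) (by omega)
        simp only [ee]; rw [show j + (m+1) - 1 = j + m by omega] at this; exact this
      have h2 : (B ^ m * B) (ee p (j + (m+1))) = (B ^ m) (B (ee p (j + (m+1)))) := rfl
      rw [h2, h1, map_smul, ih, smul_smul, Wp, Wp,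
        show j + (m+1) = (j+m) + 1 from rfl, Finset.prod_Ioc_succ_top (by omega)]
      ring_nf

include hB hB0 in
theorem pow_ee_zero (m j : ℕ) (h : j < m) : (B ^ m) (ee p j) = 0 := by
  obtain ⟨k, rfl⟩ : ∃ k, m = (j + 1) + k := ⟨m - (j+1), by omega⟩
  have h1 : (B ^ (j+1)) (ee p j) = 0 := by
    have hj := pow_ee p w B hB j 0
    rw [zero_add] at hj
    have h2 : (B ^ (j+1)) (ee p j) = B ((B ^ j) (ee p j)) := by
      rw [pow_succ']; rfl
    rw [h2, hj, map_smul]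
    simp [ee, hB0]
  have h3 : (B ^ (j + 1 + k)) (ee p j) = (B ^ k) ((B ^ (j+1)) (ee p j)) := by
    rw [add_comm, pow_add]; rfl
  rw [h3, h1, map_zero]

include hw0 in
theorem Wp_ne_zero (j m : ℕ) : Wp w j m ≠ 0 := by
  simp only [Wp, Finset.prod_ne_zero_iff]
  intro i hi
  exact hw0 i (by simp at hi; omega)

theorem norm_Wp (j m : ℕ) : ‖Wp w j m‖ = ∏ i ∈ Finset.Ioc j (j + m), ‖w i‖ := by
  simp [Wp]

theorem Wp_consecutive (j a b : ℕ) : Wp w j (a + b) = Wp w j a * Wp w (j + a) b := by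
  rw [Wp, Wp, Wp, show j + (a + b) = (j + a) + b by omega,
    ← Finset.prod_Ioc_consecutive _ (by omega : j ≤ j + a) (by omega : j + a ≤ j + a + b)]

include hp hB hB0 in
theorem coord_pow (x : lp (fun _ : ℕ => ℂ) p) (m j : ℕ) :
    ((B ^ m) x) j = Wp w j m * x (j + m) := by
  have hs := lp.hasSum_single hp x
  have hs2 := hs.mapL ((coev p j).comp (B ^ m))
  have heq : (fun n => ((coev p j).comp (B ^ m)) (lp.single p n (x n)))
      = fun n => if n = j + m then Wp w j m * x (j + m) else 0 := by
    funext n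
    simp only [ContinuousLinearMap.comp_apply, coev_apply, single_eq_smul_ee, map_smul]
    by_cases hn : n = j + m
    · subst hn
      rw [pow_ee p w B hB m j]
      simp [lp.coeFn_smul, ee_apply, mul_comm]
    · by_cases hnm : n < m
      · rw [pow_ee_zero p w B hB hB0 m n hnm]; simp [hn]
      · obtain ⟨j', rfl⟩ : ∃ j', n = j' + m := ⟨n - m, by omega⟩
        rw [pow_ee p w B hB m j']
        have : j ≠ j' := by omega
        simp [lp.coeFn_smul, ee_apply, this, Ne.symm this]
  rw [heq] at hs2
  have hs3 : HasSum (fun n => if n = j + m then Wp w j m * x (j + m) else 0)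
      (Wp w j m * x (j + m)) := hasSum_ite_eq (j + m) _
  have := hs2.unique hs3
  simpa using this

include hp in
theorem tendsto_partial_sum (x : lp (fun _ : ℕ => ℂ) p) :
    Tendsto (fun K => ∑ i ∈ Finset.range K, x i • ee p i) atTop (nhds x) := by
  have hs := lp.hasSum_single hp x
  have := hs.tendsto_sum_nat
  simpa [single_eq_smul_ee] using this

include hp in
theorem norm_sum_smul_ee_le {ι : Type*} (s : Finset ι) (c : ι → ℂ) (g : ι → ℕ) :
    ‖∑ i ∈ s, c i • ee p (g i)‖ ≤ ∑ i ∈ s, ‖c i‖ := by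
  refine (norm_sum_le _ _).trans (Finset.sum_le_sum fun i _ => ?_)
  rw [norm_smul, norm_ee p hp]
  simp

include hp in
theorem norm_corr_le {ι : Type*} (s : Finset ι) (c : ι → ℂ) (W : ι → ℂ) (g : ι → ℕ)
    (M₀ : ℝ) (hM₀ : 0 < M₀) (hW : ∀ i ∈ s, M₀ ≤ ‖W i‖) :
    ‖∑ i ∈ s, (c i / W i) • ee p (g i)‖ ≤ (∑ i ∈ s, ‖c i‖) / M₀ := by
  refine (norm_sum_smul_ee_le p hp s _ g).trans ?_
  rw [Finset.sum_div]
  refine Finset.sum_le_sum fun i hi => ?_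
  rw [norm_div]
  exact div_le_div_of_nonneg_left (norm_nonneg _) hM₀ (hW i hi)

include hp hB hB0 in
/-- Key lower-bound extraction: if `B^(D+m2) x` is close to `e_j` and `B^m2 x` is small,
then the weight product over the window `(j, j+D]` is large. -/
theorem window_lb (M : ℝ) (hM : 0 < M) (j D m2 : ℕ) (x : lp (fun _ : ℕ => ℂ) p)
    (h1 : ‖(B ^ (D + m2)) x - ee p j‖ < 1/2)
    (h2 : ‖(B ^ m2) x‖ < 1/(2*(M+1))) :
    M < ∏ i ∈ Finset.Icc (j + 1) (j + D), ‖w i‖ := by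
  have hA : ‖((B ^ (D + m2)) x) j - 1‖ < 1/2 := by
    have hb := lp.norm_apply_le_norm (p_ne_zero p) ((B ^ (D + m2)) x - ee p j) j
    have hco : ((B ^ (D + m2)) x - ee p j) j = ((B ^ (D + m2)) x) j - 1 := by
      rw [lp.coeFn_sub]
      simp [ee_apply]
    rw [hco] at hb
    exact lt_of_le_of_lt hb h1
  have hAval : ((B ^ (D + m2)) x) j = Wp w j D * (Wp w (j + D) m2 * x (j + D + m2)) := by
    rw [coord_pow p hp w B hB hB0 x (D + m2) j, Wp_consecutive, mul_assoc,
      show j + (D + m2) = j + D + m2 by omega]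
  have hC : ‖Wp w (j + D) m2 * x (j + D + m2)‖ < 1/(2*(M+1)) := by
    have hcv : ((B ^ m2) x) (j + D) = Wp w (j + D) m2 * x ((j + D) + m2) := by
      rw [coord_pow p hp w B hB hB0 x m2 (j + D)]
    have hb := lp.norm_apply_le_norm (p_ne_zero p) ((B ^ m2) x) (j + D)
    rw [hcv] at hb
    exact lt_of_le_of_lt hb h2
  -- from hA : ‖Wp j D * C - 1‖ < 1/2 so ‖Wp j D * C‖ > 1/2
  have hAlb : (1:ℝ)/2 < ‖((B ^ (D + m2)) x) j‖ := by
    have hd := norm_sub_norm_le (1:ℂ) (((B ^ (D + m2)) x) j)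
    rw [norm_sub_rev] at hd
    have h1n : ‖(1:ℂ)‖ = 1 := by simp
    linarith
  rw [hAval, norm_mul] at hAlb
  by_contra hle
  push_neg at hle
  have hWn : ‖Wp w j D‖ = ∏ i ∈ Finset.Icc (j + 1) (j + D), ‖w i‖ := by
    rw [norm_Wp, Finset.Icc_add_one_left_eq_Ioc]
  have hWle : ‖Wp w j D‖ ≤ M := by rw [hWn]; exact hle
  have hCn : (0:ℝ) ≤ ‖Wp w (j + D) m2 * x (j + D + m2)‖ := norm_nonneg _
  have : ‖Wp w j D‖ * ‖Wp w (j + D) m2 * x (j + D + m2)‖ ≤ M * (1/(2*(M+1))) := by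
    apply mul_le_mul hWle hC.le hCn hM.le
  have hMM : M * (1/(2*(M+1))) < 1/2 := by
    rw [mul_one_div, div_lt_div_iff₀ (by positivity) (by norm_num : (0:ℝ) < 2)]
    nlinarith
  linarith
end Aux
section Filters
variable (F : Set (Set ℕ))
  (hFmono : ∀ A ∈ F, ∀ A' : Set ℕ, A ⊆ A' → A' ∈ F)
  (hFinter : ∀ A ∈ F, ∀ A' ∈ F, A ∩ A' ∈ F)

include hFmono hFinter in
theorem F_iInter_finset {ι : Type*} (huniv : univ ∈ F) (s : Finset ι) (f : ι → Set ℕ)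
    (h : ∀ i ∈ s, f i ∈ F) : (⋂ i ∈ s, f i) ∈ F := by
  classical
  induction s using Finset.induction_on with
  | empty => simpa using huniv
  | @insert a t hni ih =>
      rw [Finset.set_biInter_insert]
      exact hFinter _ (h a (Finset.mem_insert_self a t)) _
        (ih fun i hi => h i (Finset.mem_insert_of_mem hi))

include hFmono hFinter in
theorem F_iInter_fintype {ι : Type*} [Fintype ι] (huniv : univ ∈ F) (f : ι → Set ℕ)
    (h : ∀ i, f i ∈ F) : (⋂ i, f i) ∈ F := by
  have := F_iInter_finset F hFmono hFinter huniv Finset.univ f (fun i _ => h i)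
  simpa using this
end Filters
theorem pairDirectSum_pow_apply {X : Type*} [AddCommGroup X] [Module ℂ X]
    [TopologicalSpace X] [IsTopologicalAddGroup X] [ContinuousSMul ℂ X]
    (B : X →L[ℂ] X) (N : ℕ) (rr : Fin (N + 1) → ℕ) (n : ℕ)
    (x : {q : Fin (N + 1) × Fin (N + 1) // q.1 < q.2} → X)
    (q : {q : Fin (N + 1) × Fin (N + 1) // q.1 < q.2}) :
    ((pairDirectSum B N rr ^ n) x) q = (B ^ ((rr q.1.2 - rr q.1.1) * n)) (x q) := by
  induction n generalizing x with
  | zero => simp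
  | succ n ih =>
      have h1 : (pairDirectSum B N rr ^ (n+1)) x
          = (pairDirectSum B N rr ^ n) (pairDirectSum B N rr x) := by
        rw [pow_succ]; rfl
      rw [h1, ih]
      have h2 : (pairDirectSum B N rr x) q = (B ^ (rr q.1.2 - rr q.1.1)) (x q) := rfl
      rw [h2]
      have h3 : (B ^ ((rr q.1.2 - rr q.1.1) * n)) ((B ^ (rr q.1.2 - rr q.1.1)) (x q))
          = (B ^ ((rr q.1.2 - rr q.1.1) * n + (rr q.1.2 - rr q.1.1))) (x q) := by
        rw [pow_add]; rfl
      rw [h3, mul_add, mul_one]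

section Main
variable (p : ℝ≥0∞) [Fact (1 ≤ p)] (hp : p ≠ ∞) (w : ℕ → ℂ)
  (hw0 : ∀ n : ℕ, 1 ≤ n → w n ≠ 0)
  (B : lp (fun _ : ℕ => ℂ) p →L[ℂ] lp (fun _ : ℕ => ℂ) p)
  (hB : ∀ n : ℕ, 1 ≤ n → B (lp.single p n 1) = w n • lp.single p (n - 1) 1)
  (hB0 : B (lp.single p 0 1) = 0)
  (F : Set (Set ℕ))
  (hFmono : ∀ A ∈ F, ∀ A' : Set ℕ, A ⊆ A' → A' ∈ F)
  (hFinter : ∀ A ∈ F, ∀ A' ∈ F, A ∩ A' ∈ F)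
  (N : ℕ) (rr : Fin (N + 1) → ℕ)

include hp hB hB0 hFmono in
theorem dirA
    (h2 : ∀ U V : Set ({q : Fin (N + 1) × Fin (N + 1) // q.1 < q.2} → lp (fun _ : ℕ => ℂ) p),
        IsOpen U → IsOpen V → U.Nonempty → V.Nonempty →
        {n : ℕ | (((pairDirectSum B N rr) ^ n) '' U ∩ V).Nonempty} ∈ F)
    (M : ℝ) (hM : 0 < M) (j : ℕ) (s l : Fin (N + 1)) (hsl : s < l) :
    {m : ℕ | M < ∏ i ∈ Finset.Icc (j + 1) (j + m * (rr l - rr s)), ‖w i‖} ∈ F := by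
  classical
  set q0 : {q : Fin (N + 1) × Fin (N + 1) // q.1 < q.2} := ⟨(s, l), hsl⟩ with hq0
  set v : {q : Fin (N + 1) × Fin (N + 1) // q.1 < q.2} → lp (fun _ : ℕ => ℂ) p :=
    fun q => if q = q0 then ee p j else 0 with hv
  have hball := h2 (Metric.ball 0 (1/(2*(M+1)))) (Metric.ball v (1/2))
    Metric.isOpen_ball Metric.isOpen_ball
    ⟨0, Metric.mem_ball_self (by positivity)⟩ ⟨v, Metric.mem_ball_self (by norm_num)⟩
  refine hFmono _ hball _ ?_
  rintro n ⟨y, ⟨x, hxU, rfl⟩, hyV⟩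
  have hx0 : ‖x q0‖ < 1/(2*(M+1)) := by
    have h := norm_le_pi_norm x q0
    have hx : ‖x‖ < 1/(2*(M+1)) := by rwa [Metric.mem_ball, dist_zero_right] at hxU
    linarith
  have hyq : ‖(B ^ ((rr l - rr s) * n)) (x q0) - ee p j‖ < 1/2 := by
    have h := norm_le_pi_norm ((pairDirectSum B N rr ^ n) x - v) q0
    have h2' : ‖(pairDirectSum B N rr ^ n) x - v‖ < 1/2 := by
      rwa [Metric.mem_ball, dist_eq_norm] at hyV
    have hco : ((pairDirectSum B N rr ^ n) x - v) q0
        = (B ^ ((rr l - rr s) * n)) (x q0) - ee p j := by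
      rw [Pi.sub_apply, pairDirectSum_pow_apply, hv]
      simp
      rfl
    rw [hco] at h
    linarith
  have key := window_lb p hp w B hB hB0 M hM j ((rr l - rr s) * n) 0 (x q0)
    (by simpa using hyq) (by simpa using hx0)
  show M < ∏ i ∈ Finset.Icc (j + 1) (j + n * (rr l - rr s)), ‖w i‖
  rw [Nat.mul_comm n (rr l - rr s)]
  exact key
end Main

section MainB
variable (p : ℝ≥0∞) [Fact (1 ≤ p)] (hp : p ≠ ∞) (w : ℕ → ℂ)
  (B : lp (fun _ : ℕ => ℂ) p →L[ℂ] lp (fun _ : ℕ => ℂ) p)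
  (hB : ∀ n : ℕ, 1 ≤ n → B (lp.single p n 1) = w n • lp.single p (n - 1) 1)
  (hB0 : B (lp.single p 0 1) = 0)
  (F : Set (Set ℕ))
  (hFmono : ∀ A ∈ F, ∀ A' : Set ℕ, A ⊆ A' → A' ∈ F)
  (N : ℕ) (rr : Fin (N + 1) → ℕ)

include hp hB hB0 hFmono in
theorem dirB (hr0 : rr 0 = 0) (hrmono : StrictMono rr)
    (h1 : ∀ (U₀ : Set (lp (fun _ : ℕ => ℂ) p)) (U : Fin N → Set (lp (fun _ : ℕ => ℂ) p)),
        IsOpen U₀ → U₀.Nonempty → (∀ l, IsOpen (U l)) → (∀ l, (U l).Nonempty) →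
        {k : ℕ | ((⋂ l : Fin N, (B ^ (rr l.succ * k)) ⁻¹' U l) ∩ U₀).Nonempty} ∈ F)
    (M : ℝ) (hM : 0 < M) (j : ℕ) (s l : Fin (N + 1)) (hsl : s < l) :
    {m : ℕ | M < ∏ i ∈ Finset.Icc (j + 1) (j + m * (rr l - rr s)), ‖w i‖} ∈ F := by
  classical
  have hl0 : l ≠ 0 := by
    intro h; subst h; exact absurd hsl (by simp [Fin.lt_def])
  set li : Fin N := l.pred hl0 with hli
  have hlis : li.succ = l := Fin.succ_pred l hl0
  have hDm : ∀ k : ℕ, (rr l - rr s) * k + rr s * k = rr l * k := fun k => by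
    rw [← Nat.add_mul, Nat.sub_add_cancel (hrmono hsl).le]
  by_cases hs0 : s = 0
  · set U : Fin N → Set (lp (fun _ : ℕ => ℂ) p) :=
      fun t => if t = li then Metric.ball (ee p j) (1/2) else univ with hU
    have hmem := h1 (Metric.ball 0 (1/(2*(M+1)))) U Metric.isOpen_ball
      ⟨0, Metric.mem_ball_self (by positivity)⟩
      (fun t => by
        rw [hU]; dsimp only
        split_ifs <;> first | exact Metric.isOpen_ball | exact isOpen_univ)
      (fun t => by
        rw [hU]; dsimp only
        split_ifs
        · exact ⟨ee p j, Metric.mem_ball_self (by norm_num)⟩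
        · exact ⟨0, mem_univ 0⟩)
    refine hFmono _ hmem _ ?_
    rintro k ⟨x, hxI, hxU0⟩
    rw [Set.mem_iInter] at hxI
    have hxl := hxI li
    rw [Set.mem_preimage, hlis] at hxl
    have hUli : U li = Metric.ball (ee p j) (1/2) := by
      rw [hU]; dsimp only; rw [if_pos rfl]
    rw [hUli, Metric.mem_ball, dist_eq_norm] at hxl
    rw [Metric.mem_ball, dist_zero_right] at hxU0
    have key := window_lb p hp w B hB hB0 M hM j ((rr l - rr s) * k) (rr s * k) x
      (by rw [hDm k]; exact hxl)
      (by rw [hs0, hr0, Nat.zero_mul]; simpa using hxU0)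
    show M < ∏ i ∈ Finset.Icc (j + 1) (j + k * (rr l - rr s)), ‖w i‖
    rw [Nat.mul_comm k (rr l - rr s)]
    exact key
  · set si : Fin N := s.pred hs0 with hsi
    have hsis : si.succ = s := Fin.succ_pred s hs0
    have hsine : si ≠ li := by
      intro h
      apply hsl.ne
      rw [← hsis, ← hlis, h]
    set U : Fin N → Set (lp (fun _ : ℕ => ℂ) p) :=
      fun t => if t = li then Metric.ball (ee p j) (1/2)
        else if t = si then Metric.ball 0 (1/(2*(M+1))) else univ with hU
    have hmem := h1 univ U isOpen_univ ⟨0, mem_univ 0⟩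
      (fun t => by
        rw [hU]; dsimp only
        split_ifs <;> first | exact Metric.isOpen_ball | exact isOpen_univ)
      (fun t => by
        rw [hU]; dsimp only
        split_ifs
        · exact ⟨ee p j, Metric.mem_ball_self (by norm_num)⟩
        · exact ⟨0, Metric.mem_ball_self (by positivity)⟩
        · exact ⟨0, mem_univ 0⟩)
    refine hFmono _ hmem _ ?_
    rintro k ⟨x, hxI, -⟩
    rw [Set.mem_iInter] at hxI
    have hxl := hxI li
    rw [Set.mem_preimage, hlis] at hxl
    have hUli : U li = Metric.ball (ee p j) (1/2) := by
      rw [hU]; dsimp only; rw [if_pos rfl]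
    rw [hUli, Metric.mem_ball, dist_eq_norm] at hxl
    have hxs := hxI si
    rw [Set.mem_preimage, hsis] at hxs
    have hUsi : U si = Metric.ball 0 (1/(2*(M+1))) := by
      rw [hU]; dsimp only; rw [if_neg hsine, if_pos rfl]
    rw [hUsi, Metric.mem_ball, dist_zero_right] at hxs
    have key := window_lb p hp w B hB hB0 M hM j ((rr l - rr s) * k) (rr s * k) x
      (by rw [hDm k]; exact hxl) hxs
    show M < ∏ i ∈ Finset.Icc (j + 1) (j + k * (rr l - rr s)), ‖w i‖
    rw [Nat.mul_comm k (rr l - rr s)]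
    exact key
end MainB

section MainC
variable (p : ℝ≥0∞) [Fact (1 ≤ p)] (hp : p ≠ ∞) (w : ℕ → ℂ)
  (hw0 : ∀ n : ℕ, 1 ≤ n → w n ≠ 0)
  (B : lp (fun _ : ℕ => ℂ) p →L[ℂ] lp (fun _ : ℕ => ℂ) p)
  (hB : ∀ n : ℕ, 1 ≤ n → B (lp.single p n 1) = w n • lp.single p (n - 1) 1)
  (hB0 : B (lp.single p 0 1) = 0)
  (F : Set (Set ℕ))
  (hFmono : ∀ A ∈ F, ∀ A' : Set ℕ, A ⊆ A' → A' ∈ F)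
  (hFinter : ∀ A ∈ F, ∀ A' ∈ F, A ∩ A' ∈ F)
  (N : ℕ) (rr : Fin (N + 1) → ℕ)

include hFmono in
theorem exceedF (hN : 1 ≤ N)
    (h3 : ∀ M : ℝ, 0 < M → ∀ j : ℕ, ∀ s l : Fin (N + 1), s < l →
        {m : ℕ | M < ∏ i ∈ Finset.Icc (j + 1) (j + m * (rr l - rr s)), ‖w i‖} ∈ F)
    (K : ℕ) : {n : ℕ | K ≤ n} ∈ F := by
  have hlast : (0 : Fin (N+1)) < Fin.last N := by
    rw [Fin.lt_def]
    simp only [Fin.val_zero, Fin.val_last]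
    omega
  set d0 := rr (Fin.last N) - rr 0 with hd0
  set M₁ : ℝ := (∑ n ∈ Finset.range K, ∏ i ∈ Finset.Icc 1 (n * d0), ‖w i‖) + 1 with hM₁def
  have hM₁ : 0 < M₁ := by
    have : (0:ℝ) ≤ ∑ n ∈ Finset.range K, ∏ i ∈ Finset.Icc 1 (n * d0), ‖w i‖ :=
      Finset.sum_nonneg fun n _ => Finset.prod_nonneg fun i _ => norm_nonneg _
    linarith
  have hA := h3 M₁ hM₁ 0 0 (Fin.last N) hlast
  refine hFmono _ hA _ ?_
  intro m hm
  simp only [mem_setOf_eq, zero_add] at hm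
  rw [← hd0] at hm
  by_contra hlt
  simp only [mem_setOf_eq, not_le] at hlt
  have hterm := Finset.single_le_sum
    (f := fun n => ∏ i ∈ Finset.Icc 1 (n * d0), ‖w i‖)
    (fun n _ => Finset.prod_nonneg fun i _ => norm_nonneg _) (Finset.mem_range.2 hlt)
  rw [hM₁def] at hm
  linarith

include hp in
theorem approx_ev (x : lp (fun _ : ℕ => ℂ) p) (r : ℝ) (hr : 0 < r) :
    ∀ᶠ K in atTop, ‖(∑ i ∈ Finset.range K, x i • ee p i) - x‖ < r := by
  obtain ⟨K₀, hK₀⟩ := Metric.tendsto_atTop.1 (tendsto_partial_sum p hp x) r hr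
  exact eventually_atTop.2 ⟨K₀, fun K hK => by
    have := hK₀ K hK; rwa [dist_eq_norm] at this⟩

include hp hw0 hB hB0 hFmono hFinter in
theorem dirC (hN : 1 ≤ N) (hr0 : rr 0 = 0) (hrmono : StrictMono rr)
    (h3 : ∀ M : ℝ, 0 < M → ∀ j : ℕ, ∀ s l : Fin (N + 1), s < l →
        {m : ℕ | M < ∏ i ∈ Finset.Icc (j + 1) (j + m * (rr l - rr s)), ‖w i‖} ∈ F) :
    ∀ U V : Set ({q : Fin (N + 1) × Fin (N + 1) // q.1 < q.2} → lp (fun _ : ℕ => ℂ) p),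
      IsOpen U → IsOpen V → U.Nonempty → V.Nonempty →
      {n : ℕ | (((pairDirectSum B N rr) ^ n) '' U ∩ V).Nonempty} ∈ F := by
  classical
  intro U V hUo hVo hUne hVne
  obtain ⟨u, hu⟩ := hUne
  obtain ⟨v, hv⟩ := hVne
  obtain ⟨ε₁, hε₁, hballU⟩ := Metric.isOpen_iff.1 hUo u hu
  obtain ⟨ε₂, hε₂, hballV⟩ := Metric.isOpen_iff.1 hVo v hv
  set δ := min ε₁ ε₂ with hδdef
  have hδ0 : 0 < δ := lt_min hε₁ hε₂
  have hδ4 : 0 < δ/4 := by positivity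
  have hev : ∀ᶠ K in atTop, (1 ≤ K ∧ ∀ q : {q : Fin (N + 1) × Fin (N + 1) // q.1 < q.2},
      ‖(∑ i ∈ Finset.range K, (u q) i • ee p i) - u q‖ < δ/4 ∧
      ‖(∑ i ∈ Finset.range K, (v q) i • ee p i) - v q‖ < δ/4) :=
    (eventually_ge_atTop 1).and (eventually_all.2 fun q =>
      (approx_ev p hp (u q) _ hδ4).and (approx_ev p hp (v q) _ hδ4))
  obtain ⟨K, hK1, hKapprox⟩ := hev.exists
  set u' : {q : Fin (N + 1) × Fin (N + 1) // q.1 < q.2} → lp (fun _ : ℕ => ℂ) p :=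
    fun q => ∑ i ∈ Finset.range K, (u q) i • ee p i with hu'def
  set v' : {q : Fin (N + 1) × Fin (N + 1) // q.1 < q.2} → lp (fun _ : ℕ => ℂ) p :=
    fun q => ∑ i ∈ Finset.range K, (v q) i • ee p i with hv'def
  set Stot : ℝ := ∑ q : {q : Fin (N + 1) × Fin (N + 1) // q.1 < q.2},
    ∑ i ∈ Finset.range K, ‖(v q) i‖ with hStotdef
  have hStot : 0 ≤ Stot :=
    Finset.sum_nonneg fun q _ => Finset.sum_nonneg fun i _ => norm_nonneg _
  set M₀ : ℝ := 4 * Stot / δ + 1 with hM₀def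
  have hM₀ : 0 < M₀ := by positivity
  have hStotM : Stot / M₀ < δ/4 := by
    rw [div_lt_iff₀ hM₀]
    have hδne : δ ≠ 0 := hδ0.ne'
    have : δ / 4 * M₀ = Stot + δ/4 := by
      rw [hM₀def]; field_simp
    rw [this]; linarith
  have hd1 : ∀ q : {q : Fin (N + 1) × Fin (N + 1) // q.1 < q.2},
      1 ≤ rr q.1.2 - rr q.1.1 := fun q => by
    have := hrmono q.2; omega
  set A : Set ℕ := {n | K ≤ n} ∩ ⋂ q : {q : Fin (N + 1) × Fin (N + 1) // q.1 < q.2},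
    ⋂ i ∈ Finset.range K,
      {n | M₀ < ∏ i' ∈ Finset.Icc (i + 1) (i + n * (rr q.1.2 - rr q.1.1)), ‖w i'‖} with hAdef
  have hexc := exceedF w F hFmono N rr hN h3 K
  have huniv : univ ∈ F := hFmono _ hexc _ (subset_univ _)
  have hAF : A ∈ F := by
    refine hFinter _ hexc _ ?_
    exact F_iInter_fintype F hFmono hFinter huniv _ fun q =>
      F_iInter_finset F hFmono hFinter huniv _ _ fun i _ => h3 M₀ hM₀ i q.1.1 q.1.2 q.2
  refine hFmono _ hAF _ ?_
  rintro n ⟨hKn, hbig⟩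
  simp only [Set.mem_iInter, Set.mem_setOf_eq] at hbig
  have hWbig : ∀ q : {q : Fin (N + 1) × Fin (N + 1) // q.1 < q.2}, ∀ i ∈ Finset.range K,
      M₀ ≤ ‖Wp w i ((rr q.1.2 - rr q.1.1) * n)‖ := by
    intro q i hi
    rw [norm_Wp, ← Finset.Icc_add_one_left_eq_Ioc, Nat.mul_comm]
    exact (hbig q i hi).le
  set x : {q : Fin (N + 1) × Fin (N + 1) // q.1 < q.2} → lp (fun _ : ℕ => ℂ) p :=
    fun q => u' q + ∑ i ∈ Finset.range K,
      ((v q) i / Wp w i ((rr q.1.2 - rr q.1.1) * n)) • ee p (i + (rr q.1.2 - rr q.1.1) * n)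
    with hxdef
  have hKle : ∀ q : {q : Fin (N + 1) × Fin (N + 1) // q.1 < q.2},
      K ≤ (rr q.1.2 - rr q.1.1) * n := fun q =>
    le_trans hKn (le_trans (Nat.le_mul_of_pos_left n (hd1 q)) (le_refl _))
  have claim1 : ∀ q : {q : Fin (N + 1) × Fin (N + 1) // q.1 < q.2},
      (B ^ ((rr q.1.2 - rr q.1.1) * n)) (x q) = v' q := by
    intro q
    rw [hxdef]
    simp only [map_add, map_sum, map_smul]
    have hz : ∀ i ∈ Finset.range K, (u q) i • (B ^ ((rr q.1.2 - rr q.1.1) * n)) (ee p i) = 0 := by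
      intro i hi
      rw [pow_ee_zero p w B hB hB0 _ i (lt_of_lt_of_le (Finset.mem_range.1 hi) (hKle q))]
      simp
    rw [hu'def]
    simp only [map_sum, map_smul]
    rw [Finset.sum_congr rfl hz, Finset.sum_const_zero, zero_add]
    rw [hv'def]
    refine Finset.sum_congr rfl fun i hi => ?_
    rw [pow_ee p w B hB _ i, smul_smul, div_mul_cancel₀]
    exact Wp_ne_zero w hw0 i _
  have claim2 : ∀ q : {q : Fin (N + 1) × Fin (N + 1) // q.1 < q.2},
      ‖x q - u' q‖ < δ/4 := by
    intro q
    have heq : x q - u' q = ∑ i ∈ Finset.range K,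
        ((v q) i / Wp w i ((rr q.1.2 - rr q.1.1) * n)) • ee p (i + (rr q.1.2 - rr q.1.1) * n) := by
      rw [hxdef]; exact add_sub_cancel_left _ _
    rw [heq]
    refine lt_of_le_of_lt (norm_corr_le p hp (Finset.range K) _ _ _ M₀ hM₀ (hWbig q)) ?_
    refine lt_of_le_of_lt ?_ hStotM
    have hnum : (∑ i ∈ Finset.range K, ‖(v q) i‖) ≤ Stot :=
      Finset.single_le_sum (f := fun q => ∑ i ∈ Finset.range K, ‖(v q) i‖)
        (fun q _ => Finset.sum_nonneg fun i _ => norm_nonneg _) (Finset.mem_univ q)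
    gcongr
  -- assemble
  have hxu' : ‖x - u'‖ < δ/4 := by
    rw [pi_norm_lt_iff hδ4]
    intro q
    rw [Pi.sub_apply]
    exact claim2 q
  have hu'u : ‖u' - u‖ < δ/4 := by
    rw [pi_norm_lt_iff hδ4]
    intro q
    rw [Pi.sub_apply]
    exact (hKapprox q).1
  have hxU : x ∈ U := by
    apply hballU
    rw [Metric.mem_ball]
    calc dist x u ≤ dist x u' + dist u' u := dist_triangle _ _ _
      _ < δ/4 + δ/4 := by
          rw [dist_eq_norm, dist_eq_norm]
          exact add_lt_add hxu' hu'u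
      _ ≤ δ := by linarith
      _ ≤ ε₁ := min_le_left _ _
  have hTx : (pairDirectSum B N rr ^ n) x = v' := by
    funext q
    rw [pairDirectSum_pow_apply]
    exact claim1 q
  have hv'V : v' ∈ V := by
    apply hballV
    rw [Metric.mem_ball, dist_eq_norm]
    have : ‖v' - v‖ < δ/4 := by
      rw [pi_norm_lt_iff hδ4]
      intro q
      rw [Pi.sub_apply]
      exact (hKapprox q).2
    calc ‖v' - v‖ < δ/4 := this
      _ ≤ δ := by linarith
      _ ≤ ε₂ := min_le_right _ _
  exact ⟨v', ⟨x, hxU, hTx⟩, hv'V⟩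
end MainC

section MainD
variable (p : ℝ≥0∞) [Fact (1 ≤ p)] (hp : p ≠ ∞) (w : ℕ → ℂ)
  (hw0 : ∀ n : ℕ, 1 ≤ n → w n ≠ 0)
  (B : lp (fun _ : ℕ => ℂ) p →L[ℂ] lp (fun _ : ℕ => ℂ) p)
  (hB : ∀ n : ℕ, 1 ≤ n → B (lp.single p n 1) = w n • lp.single p (n - 1) 1)
  (hB0 : B (lp.single p 0 1) = 0)
  (F : Set (Set ℕ))
  (hFmono : ∀ A ∈ F, ∀ A' : Set ℕ, A ⊆ A' → A' ∈ F)
  (hFinter : ∀ A ∈ F, ∀ A' ∈ F, A ∩ A' ∈ F)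
  (N : ℕ) (rr : Fin (N + 1) → ℕ)

include hp hw0 hB hB0 hFmono hFinter in
theorem dirD (hN : 1 ≤ N) (hr0 : rr 0 = 0) (hrmono : StrictMono rr)
    (h3 : ∀ M : ℝ, 0 < M → ∀ j : ℕ, ∀ s l : Fin (N + 1), s < l →
        {m : ℕ | M < ∏ i ∈ Finset.Icc (j + 1) (j + m * (rr l - rr s)), ‖w i‖} ∈ F) :
    ∀ (U₀ : Set (lp (fun _ : ℕ => ℂ) p)) (U : Fin N → Set (lp (fun _ : ℕ => ℂ) p)),
      IsOpen U₀ → U₀.Nonempty → (∀ l, IsOpen (U l)) → (∀ l, (U l).Nonempty) →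
      {k : ℕ | ((⋂ l : Fin N, (B ^ (rr l.succ * k)) ⁻¹' U l) ∩ U₀).Nonempty} ∈ F := by
  classical
  intro U₀ U hU₀o hU₀ne hUo hUne
  obtain ⟨u, hu⟩ := hU₀ne
  choose v hv using hUne
  obtain ⟨ε₀, hε₀, hball₀⟩ := Metric.isOpen_iff.1 hU₀o u hu
  choose ε hε hball using fun t => Metric.isOpen_iff.1 (hUo t) (v t) (hv t)
  have hNE : Nonempty (Fin N) := ⟨⟨0, hN⟩⟩
  set δ := min ε₀ (Finset.univ.inf' Finset.univ_nonempty ε) with hδdef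
  have hδ0 : 0 < δ := by
    apply lt_min hε₀
    rw [Finset.lt_inf'_iff]
    exact fun t _ => hε t
  have hδε : ∀ t, δ ≤ ε t := fun t =>
    le_trans (min_le_right _ _) (Finset.inf'_le _ (Finset.mem_univ t))
  have hδ4 : 0 < δ/4 := by positivity
  have hev : ∀ᶠ K in atTop, (1 ≤ K ∧
      ‖(∑ i ∈ Finset.range K, u i • ee p i) - u‖ < δ/4 ∧
      ∀ t : Fin N, ‖(∑ i ∈ Finset.range K, (v t) i • ee p i) - v t‖ < δ/4) :=
    (eventually_ge_atTop 1).and ((approx_ev p hp u _ hδ4).and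
      (eventually_all.2 fun t => approx_ev p hp (v t) _ hδ4))
  obtain ⟨K, hK1, huapp, hvapp⟩ := hev.exists
  set u' : lp (fun _ : ℕ => ℂ) p := ∑ i ∈ Finset.range K, u i • ee p i with hu'def
  set v' : Fin N → lp (fun _ : ℕ => ℂ) p :=
    fun t => ∑ i ∈ Finset.range K, (v t) i • ee p i with hv'def
  set Stot : ℝ := ∑ t : Fin N, ∑ i ∈ Finset.range K, ‖(v t) i‖ with hStotdef
  have hStot : 0 ≤ Stot :=
    Finset.sum_nonneg fun t _ => Finset.sum_nonneg fun i _ => norm_nonneg _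
  set M₀ : ℝ := 4 * Stot / δ + 1 with hM₀def
  have hM₀ : 0 < M₀ := by positivity
  have hStotM : Stot / M₀ < δ/4 := by
    rw [div_lt_iff₀ hM₀]
    have hδne : δ ≠ 0 := hδ0.ne'
    have : δ / 4 * M₀ = Stot + δ/4 := by
      rw [hM₀def]; field_simp
    rw [this]; linarith
  set A : Set ℕ := {k | K ≤ k} ∩ ⋂ q : {q : Fin (N + 1) × Fin (N + 1) // q.1 < q.2},
    ⋂ i ∈ Finset.range K,
      {k | M₀ < ∏ i' ∈ Finset.Icc (i + 1) (i + k * (rr q.1.2 - rr q.1.1)), ‖w i'‖} with hAdef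
  have hexc := exceedF w F hFmono N rr hN h3 K
  have huniv : univ ∈ F := hFmono _ hexc _ (subset_univ _)
  have hAF : A ∈ F := by
    refine hFinter _ hexc _ ?_
    exact F_iInter_fintype F hFmono hFinter huniv _ fun q =>
      F_iInter_finset F hFmono hFinter huniv _ _ fun i _ => h3 M₀ hM₀ i q.1.1 q.1.2 q.2
  refine hFmono _ hAF _ ?_
  rintro k ⟨hKk, hbig⟩
  simp only [Set.mem_setOf_eq] at hKk
  simp only [Set.mem_iInter, Set.mem_setOf_eq] at hbig
  have hWbig : ∀ (s l : Fin (N+1)), s < l → ∀ i ∈ Finset.range K,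
      M₀ ≤ ‖Wp w i ((rr l - rr s) * k)‖ := by
    intro s l hsl i hi
    have := hbig ⟨(s, l), hsl⟩ i hi
    rw [norm_Wp, ← Finset.Icc_add_one_left_eq_Ioc, Nat.mul_comm]
    exact this.le
  set m : Fin N → ℕ := fun t => rr t.succ * k with hmdef
  have hrpos : ∀ t : Fin N, 1 ≤ rr t.succ := fun t => by
    have h0 : (0 : Fin (N+1)) < t.succ := t.succ_pos
    have := hrmono h0
    omega
  have hmK : ∀ t, K ≤ m t := fun t => by
    have h1 : k ≤ rr t.succ * k := Nat.le_mul_of_pos_left k (hrpos t)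
    have e1 : m t = rr t.succ * k := rfl
    omega
  have hWbig0 : ∀ t : Fin N, ∀ i ∈ Finset.range K, M₀ ≤ ‖Wp w i (m t)‖ := by
    intro t i hi
    have := hWbig 0 t.succ t.succ_pos i hi
    rwa [hr0, Nat.sub_zero] at this
  set corr : Fin N → lp (fun _ : ℕ => ℂ) p :=
    fun t => ∑ i ∈ Finset.range K, ((v t) i / Wp w i (m t)) • ee p (i + m t) with hcorrdef
  set x : lp (fun _ : ℕ => ℂ) p := u' + ∑ t : Fin N, corr t with hxdef
  have hBu' : ∀ t, (B ^ (m t)) u' = 0 := by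
    intro t
    rw [hu'def, map_sum]
    refine Finset.sum_eq_zero fun i hi => ?_
    rw [map_smul, pow_ee_zero p w B hB hB0 _ i
      (lt_of_lt_of_le (Finset.mem_range.1 hi) (hmK t))]
    simp
  have hdiag : ∀ t, (B ^ (m t)) (corr t) = v' t := by
    intro t
    rw [hcorrdef]
    simp only [map_sum, map_smul]
    refine Finset.sum_congr rfl fun i hi => ?_
    rw [pow_ee p w B hB _ i, smul_smul, div_mul_cancel₀]
    exact Wp_ne_zero w hw0 i _
  have hlow : ∀ t t' : Fin N, t' < t → (B ^ (m t)) (corr t') = 0 := by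
    intro t t' htt
    rw [hcorrdef]
    simp only [map_sum, map_smul]
    refine Finset.sum_eq_zero fun i hi => ?_
    have hsucc : rr t'.succ + 1 ≤ rr t.succ := hrmono (Fin.succ_lt_succ_iff.2 htt)
    have hmul : (rr t'.succ + 1) * k ≤ rr t.succ * k := Nat.mul_le_mul_right k hsucc
    rw [add_mul, one_mul] at hmul
    have hik : i < K := Finset.mem_range.1 hi
    have e1 : m t = rr t.succ * k := rfl
    have e2 : m t' = rr t'.succ * k := rfl
    rw [pow_ee_zero p w B hB hB0 _ _ (by omega)]
    simp
  have hcross : ∀ t t' : Fin N, t < t' → ‖(B ^ (m t)) (corr t')‖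
      ≤ (∑ i ∈ Finset.range K, ‖(v t') i‖) / M₀ := by
    intro t t' htt
    have hsl : t.succ < t'.succ := Fin.succ_lt_succ_iff.2 htt
    set Δ := (rr t'.succ - rr t.succ) * k with hΔdef
    have hmm : m t' = Δ + m t := by
      rw [hmdef, hΔdef]
      simp only
      rw [← Nat.add_mul, Nat.sub_add_cancel (hrmono hsl).le]
    have heval : (B ^ (m t)) (corr t') = ∑ i ∈ Finset.range K,
        ((v t') i / Wp w i Δ) • ee p (i + Δ) := by
      rw [hcorrdef]
      simp only [map_sum, map_smul]
      refine Finset.sum_congr rfl fun i hi => ?_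
      have hidx : i + m t' = (i + Δ) + m t := by omega
      rw [hidx, pow_ee p w B hB _ (i + Δ), smul_smul]
      congr 1
      rw [hmm, Wp_consecutive]
      have h1 := Wp_ne_zero w hw0 i Δ
      have h2 := Wp_ne_zero w hw0 (i + Δ) (m t)
      field_simp
    rw [heval]
    exact norm_corr_le p hp (Finset.range K) _ _ _ M₀ hM₀
      (fun i hi => hWbig t.succ t'.succ hsl i hi)
  -- bounds
  have hxu' : ‖x - u'‖ < δ/4 := by
    have heq : x - u' = ∑ t : Fin N, corr t := by rw [hxdef]; exact add_sub_cancel_left _ _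
    rw [heq]
    refine lt_of_le_of_lt (norm_sum_le _ _) (lt_of_le_of_lt ?_ hStotM)
    rw [hStotdef, Finset.sum_div]
    refine Finset.sum_le_sum fun t _ => ?_
    exact norm_corr_le p hp (Finset.range K) _ _ _ M₀ hM₀ (hWbig0 t)
  have hxU₀ : x ∈ U₀ := by
    apply hball₀
    rw [Metric.mem_ball]
    calc dist x u ≤ dist x u' + dist u' u := dist_triangle _ _ _
      _ < δ/4 + δ/4 := by
          rw [dist_eq_norm, dist_eq_norm]
          exact add_lt_add hxu' huapp
      _ ≤ δ := by linarith
      _ ≤ ε₀ := min_le_left _ _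
  have hcomp : ∀ t : Fin N, (B ^ (m t)) x ∈ U t := by
    intro t
    have hsum : (B ^ (m t)) x = v' t + ∑ t' ∈ Finset.univ.erase t, (B ^ (m t)) (corr t') := by
      rw [hxdef, map_add, hBu' t, zero_add, map_sum,
        ← Finset.add_sum_erase _ _ (Finset.mem_univ t), hdiag t]
    have hbound : ‖(B ^ (m t)) x - v' t‖ < δ/4 := by
      rw [hsum, add_sub_cancel_left]
      refine lt_of_le_of_lt (norm_sum_le _ _) (lt_of_le_of_lt ?_ hStotM)
      have hle : ∀ t' ∈ Finset.univ.erase t, ‖(B ^ (m t)) (corr t')‖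
          ≤ (∑ i ∈ Finset.range K, ‖(v t') i‖) / M₀ := by
        intro t' ht'
        rcases lt_or_gt_of_ne (Finset.ne_of_mem_erase ht') with h | h
        · rw [hlow t t' h]
          simp only [norm_zero]
          positivity
        · exact hcross t t' h
      refine le_trans (Finset.sum_le_sum hle) ?_
      rw [hStotdef, Finset.sum_div]
      refine Finset.sum_le_sum_of_subset_of_nonneg (Finset.erase_subset _ _)
        fun t' _ _ => by positivity
    apply hball t
    rw [Metric.mem_ball]
    calc dist ((B ^ (m t)) x) (v t) ≤ dist ((B ^ (m t)) x) (v' t) + dist (v' t) (v t) :=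
        dist_triangle _ _ _
      _ < δ/4 + δ/4 := by
          rw [dist_eq_norm, dist_eq_norm]
          exact add_lt_add hbound (hvapp t)
      _ ≤ δ := by linarith
      _ ≤ ε t := hδε t
  exact ⟨x, Set.mem_inter (Set.mem_iInter.2 fun t => Set.mem_preimage.2 (hcomp t)) hxU₀⟩
end MainD

/-- Characterization of d-F tuples of powers of a unilateral weighted backward shift
`B_w` on `ℓ^p(ℕ, ℂ)` (`1 ≤ p < ∞`), for a filter family `F` on `ℕ` and exponents
`0 = r₀ < 1 ≤ r₁ < ⋯ < r_N`: (i) `(B_w^{r₁}, …, B_w^{r_N})` is d-F, (ii) the direct sum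
`⊕_{0 ≤ s < l ≤ N} B_w^{r_l − r_s}` is an F-operator, (iii) the weight-product
condition holds along `F`. -/
theorem unilateralShift_dF_characterization
    (p : ℝ≥0∞) [Fact (1 ≤ p)] (hp : p ≠ ∞)
    (w : ℕ → ℂ) (hwb : ∃ c : ℝ, ∀ n : ℕ, ‖w n‖ ≤ c) (hw0 : ∀ n : ℕ, 1 ≤ n → w n ≠ 0)
    (B : lp (fun _ : ℕ => ℂ) p →L[ℂ] lp (fun _ : ℕ => ℂ) p)
    (hB : ∀ n : ℕ, 1 ≤ n → B (lp.single p n 1) = w n • lp.single p (n - 1) 1)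
    (hB0 : B (lp.single p 0 1) = 0)
    (F : Set (Set ℕ))
    (hFinf : ∀ A ∈ F, A.Infinite)
    (hFmono : ∀ A ∈ F, ∀ A' : Set ℕ, A ⊆ A' → A' ∈ F)
    (hFinter : ∀ A ∈ F, ∀ A' ∈ F, A ∩ A' ∈ F)
    (N : ℕ) (hN : 1 ≤ N) (rr : Fin (N + 1) → ℕ)
    (hr0 : rr 0 = 0) (hr1 : 1 ≤ rr 1) (hrmono : StrictMono rr) :
    ((∀ (U₀ : Set (lp (fun _ : ℕ => ℂ) p)) (U : Fin N → Set (lp (fun _ : ℕ => ℂ) p)),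
        IsOpen U₀ → U₀.Nonempty → (∀ l, IsOpen (U l)) → (∀ l, (U l).Nonempty) →
        {k : ℕ | ((⋂ l : Fin N, (B ^ (rr l.succ * k)) ⁻¹' U l) ∩ U₀).Nonempty} ∈ F) ↔
      (∀ U V : Set ({q : Fin (N + 1) × Fin (N + 1) // q.1 < q.2} →
          lp (fun _ : ℕ => ℂ) p),
        IsOpen U → IsOpen V → U.Nonempty → V.Nonempty →
        {n : ℕ | (((pairDirectSum B N rr) ^ n) '' U ∩ V).Nonempty} ∈ F)) ∧
    ((∀ U V : Set ({q : Fin (N + 1) × Fin (N + 1) // q.1 < q.2} →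
          lp (fun _ : ℕ => ℂ) p),
        IsOpen U → IsOpen V → U.Nonempty → V.Nonempty →
        {n : ℕ | (((pairDirectSum B N rr) ^ n) '' U ∩ V).Nonempty} ∈ F) ↔
      (∀ M : ℝ, 0 < M → ∀ j : ℕ, ∀ s l : Fin (N + 1), s < l →
        {m : ℕ | M <
            ∏ i ∈ Finset.Icc (j + 1) (j + m * (rr l - rr s)), ‖w i‖} ∈ F)) := by
  constructor
  · constructor
    · intro h1
      exact dirC p hp w hw0 B hB hB0 F hFmono hFinter N rr hN hr0 hrmono
        (fun M hM j s l hsl => dirB p hp w B hB hB0 F hFmono N rr hr0 hrmono h1 M hM j s l hsl)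
    · intro h2
      exact dirD p hp w hw0 B hB hB0 F hFmono hFinter N rr hN hr0 hrmono
        (fun M hM j s l hsl => dirA p hp w B hB hB0 F hFmono N rr h2 M hM j s l hsl)
  · constructor
    · intro h2
      exact fun M hM j s l hsl => dirA p hp w B hB hB0 F hFmono N rr h2 M hM j s l hsl
    · intro h3
      exact dirC p hp w hw0 B hB hB0 F hFmono hFinter N rr hN hr0 hrmono h3
end

section
/- Let B ⊆ ℕ be an IP* set and let r ≥ 1 be an integer. Then the set {m ∈ ℕ : tm ∈ B for every t = 1, 2, …, r} is an IP* set. -/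
open Filter Set

/-- `A ⊆ ℕ` is an IP set: there is a sequence of positive integers all of whose
nonempty finite sums lie in `A`. -/
def IPSet (A : Set ℕ) : Prop :=
  ∃ x : ℕ → ℕ, (∀ n, 0 < x n) ∧
    ∀ F : Finset ℕ, F.Nonempty → (∑ n ∈ F, x n) ∈ A

/-- `A ⊆ ℕ` is an IP* set: it meets every IP set. -/
def IPStarSet (A : Set ℕ) : Prop :=
  ∀ B : Set ℕ, IPSet B → (A ∩ B).Nonempty

/-- Every element of `FS a` is a finite sum of entries of `a`. -/
lemma FS_exists_finset {a : Stream' ℕ} {m : ℕ} (h : m ∈ Hindman.FS a) :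
    ∃ F : Finset ℕ, F.Nonempty ∧ ∑ n ∈ F, a.get n = m := by
  induction h with
  | head' a => exact ⟨{0}, ⟨0, by simp⟩, by simp⟩
  | tail' a m h ih =>
    obtain ⟨F, hF, hsum⟩ := ih
    refine ⟨F.map ⟨Nat.succ, Nat.succ_injective⟩, hF.map, ?_⟩
    rw [Finset.sum_map]
    simpa using hsum
  | cons' a m h ih =>
    obtain ⟨F, hF, hsum⟩ := ih
    refine ⟨insert 0 (F.map ⟨Nat.succ, Nat.succ_injective⟩), Finset.insert_nonempty _ _, ?_⟩
    rw [Finset.sum_insert (by simp), Finset.sum_map]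
    have : (∑ n ∈ F, a.get (n + 1)) = m := by simpa using hsum
    simp only [Function.Embedding.coeFn_mk]
    rw [show (∑ n ∈ F, a.get n.succ) = m from this]

/-- If `A` is IP* and `C` is IP, then `A ∩ C` is IP (via Hindman's theorem). -/
lemma IPSet_inter_of_star {A C : Set ℕ} (hA : IPStarSet A) (hC : IPSet C) :
    IPSet (A ∩ C) := by
  obtain ⟨x, hxpos, hxsum⟩ := hC
  set a : Stream' ℕ := x with ha
  have hget : ∀ n, a.get n = x n := fun _ => rfl
  have hFSsub : Hindman.FS a ⊆ C := by
    intro m hm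
    obtain ⟨F, hF, hsum⟩ := FS_exists_finset hm
    rw [← hsum]
    simpa [hget] using hxsum F hF
  have hpos : ∀ m ∈ Hindman.FS a, 0 < m := by
    intro m hm
    obtain ⟨F, hF, hsum⟩ := FS_exists_finset hm
    rw [← hsum]
    obtain ⟨i, hi⟩ := hF
    exact Finset.sum_pos' (fun _ _ => Nat.zero_le _) ⟨i, hi, by simpa [hget] using hxpos i⟩
  -- partition FS a into the part inside A and the part outside
  obtain ⟨c, hc, b, hb⟩ := Hindman.FS_partition_regular a
    {A ∩ Hindman.FS a, Hindman.FS a \ A}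
    (Set.toFinite _)
    (by
      intro m hm
      by_cases h : m ∈ A
      · exact ⟨A ∩ Hindman.FS a, by simp, h, hm⟩
      · exact ⟨Hindman.FS a \ A, by simp, hm, h⟩)
  have hbFS : Hindman.FS b ⊆ Hindman.FS a := by
    rcases hc with rfl | rfl
    · exact hb.trans inter_subset_right
    · exact hb.trans diff_subset
  have hbIP : IPSet (Hindman.FS b) := by
    refine ⟨fun n => b.get n, fun n => hpos _ (hbFS (Hindman.FS.singleton b n)), ?_⟩
    intro F hF
    exact Hindman.FS.finset_sum b F hF
  rcases hc with rfl | rfl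
  · refine ⟨fun n => b.get n, fun n => hpos _ (hbFS (Hindman.FS.singleton b n)), ?_⟩
    intro F hF
    have := hb (Hindman.FS.finset_sum b F hF)
    exact ⟨this.1, hFSsub this.2⟩
  · exfalso
    obtain ⟨m, hmA, hmB⟩ := hA _ hbIP
    exact (hb hmB).2 hmA

/-- The intersection of two IP* sets is IP*. -/
lemma IPStarSet_inter {A A' : Set ℕ} (hA : IPStarSet A) (hA' : IPStarSet A') :
    IPStarSet (A ∩ A') := by
  intro C hC
  obtain ⟨m, hm, hm'⟩ := hA _ (IPSet_inter_of_star hA' hC)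
  exact ⟨m, ⟨hm, hm'.1⟩, hm'.2⟩

/-- Dilation: if `B` is IP* and `t > 0` then `{m | t*m ∈ B}` is IP*. -/
lemma IPStarSet_dilate {B : Set ℕ} (hB : IPStarSet B) {t : ℕ} (ht : 0 < t) :
    IPStarSet {m : ℕ | t * m ∈ B} := by
  intro C hC
  obtain ⟨x, hxpos, hxsum⟩ := hC
  set D : Set ℕ := {n | ∃ F : Finset ℕ, F.Nonempty ∧ n = t * ∑ i ∈ F, x i} with hD
  have hDIP : IPSet D := by
    refine ⟨fun n => t * x n, fun n => Nat.mul_pos ht (hxpos n), ?_⟩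
    intro F hF
    exact ⟨F, hF, (Finset.mul_sum _ _ _).symm⟩
  obtain ⟨n, hnB, F, hF, hn⟩ := hB _ hDIP
  refine ⟨∑ i ∈ F, x i, ?_, hxsum F hF⟩
  simpa [← hn] using hnB

/-- If `B` is an IP* set and `r ≥ 1`, then `{m : tm ∈ B for every t = 1, …, r}`
is an IP* set. -/
theorem IPStar_of_dilates (B : Set ℕ) (hB : IPStarSet B) (r : ℕ) (hr : 1 ≤ r) :
    IPStarSet {m : ℕ | ∀ t : ℕ, 1 ≤ t → t ≤ r → t * m ∈ B} := by
  induction r with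
  | zero => omega
  | succ r ih =>
    rcases Nat.eq_or_lt_of_le hr with h | h
    · -- r + 1 = 1
      have hr0 : r = 0 := by omega
      subst hr0
      intro C hC
      obtain ⟨m, hm, hm'⟩ := hB C hC
      refine ⟨m, ?_, hm'⟩
      intro t ht1 ht2
      have : t = 1 := by omega
      subst this
      simpa using hm
    · have hr' : 1 ≤ r := by omega
      have h1 := ih hr'
      have h2 := IPStarSet_dilate hB (t := r + 1) (by omega)
      have h3 := IPStarSet_inter h1 h2
      have heq : ({m : ℕ | ∀ t : ℕ, 1 ≤ t → t ≤ r → t * m ∈ B} ∩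
          {m : ℕ | (r + 1) * m ∈ B}) =
          {m : ℕ | ∀ t : ℕ, 1 ≤ t → t ≤ r + 1 → t * m ∈ B} := by
        ext m
        constructor
        · rintro ⟨hm1, hm2⟩ t ht1 ht2
          rcases Nat.eq_or_lt_of_le ht2 with h | h
          · subst h; exact hm2
          · exact hm1 t ht1 (by omega)
        · intro hm
          exact ⟨fun t ht1 ht2 => hm t ht1 (by omega), hm (r + 1) (by omega) le_rfl⟩
      rwa [heq] at h3
end

section
/- Every D*-set in ℕ is syndetic; that is, if A ⊆ ℕ belongs to every idempotent ultrafilter on ℕ all of whose members have positive upper Banach density, then A is syndetic. -/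
open Filter Set

/-- Upper Banach density of a set of natural numbers:
`Bd(A) = limsup_{s→∞} (limsup_{k→∞} |A ∩ [k+1, k+s]|) / s`. -/
noncomputable def upperBanachDensity (A : Set ℕ) : ℝ :=
  Filter.limsup (fun s : ℕ =>
    (Filter.limsup (fun k : ℕ => ((A ∩ Set.Ioc k (k + s)).ncard : ℝ)) Filter.atTop) / s)
    Filter.atTop

/-- An ultrafilter `p` on `ℕ` is idempotent for the sum `p + p` defined by
`A ∈ p + q ↔ {n | {m | n + m ∈ A} ∈ q} ∈ p`. -/
def IsIdempotentUF (p : Ultrafilter ℕ) : Prop :=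
  ∀ A : Set ℕ, A ∈ p ↔ {n : ℕ | {m : ℕ | n + m ∈ A} ∈ p} ∈ p

/-- `A ⊆ ℕ` is a D*-set: `A` belongs to every idempotent ultrafilter on `ℕ` all of whose
members have positive upper Banach density. -/
def DStarSet (A : Set ℕ) : Prop :=
  ∀ p : Ultrafilter ℕ, IsIdempotentUF p →
    (∀ B ∈ p, 0 < upperBanachDensity B) → A ∈ p

/-- `A ⊆ ℕ` is syndetic: some `M` such that every interval of `M` consecutive
natural numbers meets `A`. -/
def Syndetic (A : Set ℕ) : Prop :=
  ∃ M : ℕ, ∀ n : ℕ, ∃ k, n ≤ k ∧ k < n + M ∧ k ∈ A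

/-! ### Auxiliary counting lemmas -/

namespace DStarAux

/-- Number of points of `B` in the window `(k, k+s]`. -/
noncomputable def cnt (B : Set ℕ) (k s : ℕ) : ℕ := (B ∩ Set.Ioc k (k + s)).ncard

lemma cnt_finite (B : Set ℕ) (k s : ℕ) : (B ∩ Set.Ioc k (k + s)).Finite :=
  (Set.finite_Ioc k (k + s)).inter_of_right B

lemma cnt_eq (B : Set ℕ) (k s : ℕ) [DecidablePred (· ∈ B)] :
    cnt B k s = ((Finset.Ioc k (k + s)).filter (· ∈ B)).card := by
  rw [cnt, ← Set.ncard_coe_finset]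
  congr 1
  ext x
  simp [and_comm]

lemma cnt_le (B : Set ℕ) (k s : ℕ) : cnt B k s ≤ s := by
  classical
  rw [cnt_eq]
  calc ((Finset.Ioc k (k + s)).filter (· ∈ B)).card ≤ (Finset.Ioc k (k + s)).card :=
        Finset.card_filter_le _ _
    _ = s := by rw [Nat.card_Ioc]; omega

lemma cnt_mono {B C : Set ℕ} (h : B ⊆ C) (k s : ℕ) : cnt B k s ≤ cnt C k s :=
  Set.ncard_le_ncard (Set.inter_subset_inter_left _ h) (cnt_finite C k s)

lemma cnt_full {B : Set ℕ} {k s : ℕ} (h : Set.Ioc k (k + s) ⊆ B) : cnt B k s = s := by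
  rw [cnt, Set.inter_eq_self_of_subset_right h, ← Finset.coe_Ioc, Set.ncard_coe_finset,
    Nat.card_Ioc]
  omega

lemma cnt_add_compl (B : Set ℕ) (k s : ℕ) : s ≤ cnt B k s + cnt Bᶜ k s := by
  have h : Set.Ioc k (k + s) ⊆ (B ∩ Set.Ioc k (k + s)) ∪ (Bᶜ ∩ Set.Ioc k (k + s)) := by
    intro x hx
    by_cases hxB : x ∈ B
    · exact Or.inl ⟨hxB, hx⟩
    · exact Or.inr ⟨hxB, hx⟩
  calc s = (Set.Ioc k (k + s)).ncard := by
        rw [← Finset.coe_Ioc, Set.ncard_coe_finset, Nat.card_Ioc]; omega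
    _ ≤ ((B ∩ Set.Ioc k (k + s)) ∪ (Bᶜ ∩ Set.Ioc k (k + s))).ncard :=
        Set.ncard_le_ncard h ((cnt_finite B k s).union (cnt_finite Bᶜ k s))
    _ ≤ cnt B k s + cnt Bᶜ k s := Set.ncard_union_le _ _

lemma cnt_inter (B C : Set ℕ) (k s : ℕ) :
    cnt B k s + cnt C k s ≤ cnt (B ∩ C) k s + s := by
  have h1 := Set.ncard_inter_add_ncard_union (B ∩ Set.Ioc k (k + s)) (C ∩ Set.Ioc k (k + s))
    (cnt_finite B k s) (cnt_finite C k s)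
  have h2 : (B ∩ Set.Ioc k (k + s)) ∩ (C ∩ Set.Ioc k (k + s)) = (B ∩ C) ∩ Set.Ioc k (k + s) := by
    ext x; simp [and_assoc]; tauto
  have h3 : (B ∩ Set.Ioc k (k + s)) ∪ (C ∩ Set.Ioc k (k + s)) = (B ∪ C) ∩ Set.Ioc k (k + s) := by
    rw [Set.union_inter_distrib_right]
  have h4 : cnt (B ∪ C) k s ≤ s := cnt_le _ _ _
  rw [h2, h3] at h1
  have : cnt B k s + cnt C k s = cnt (B ∩ C) k s + cnt (B ∪ C) k s := h1.symm
  omega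

/-- Chopping a long window into short ones: pigeonhole. -/
lemma cnt_chop {B : Set ℕ} {b L s m : ℕ} (hs : 0 < s) (hm : 0 < m) (hL : L ≤ m * s) :
    ∃ t < m, cnt B b L ≤ m * cnt B (b + t * s) s := by
  classical
  have cover : cnt B b L ≤ ∑ t ∈ Finset.range m, cnt B (b + t * s) s := by
    rw [cnt_eq]
    have hsub : (Finset.Ioc b (b + L)).filter (· ∈ B) ⊆
        (Finset.range m).biUnion (fun t => (Finset.Ioc (b + t * s) (b + t * s + s)).filter (· ∈ B)) := by
      intro x hx
      rw [Finset.mem_filter, Finset.mem_Ioc] at hx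
      obtain ⟨⟨hbx, hxL⟩, hxB⟩ := hx
      set t := (x - b - 1) / s with ht
      have h1 : x - b - 1 < m * s := lt_of_lt_of_le (by omega) hL
      have htm : t < m := by
        rw [ht, Nat.div_lt_iff_lt_mul hs]
        exact h1
      have h4 : t * s ≤ x - b - 1 := Nat.div_mul_le_self _ _
      have h5 : x - b - 1 < t * s + s := by
        rw [ht]
        exact Nat.lt_div_mul_add hs
      refine Finset.mem_biUnion.2 ⟨t, Finset.mem_range.2 htm, ?_⟩
      rw [Finset.mem_filter, Finset.mem_Ioc]
      have hmem2 : b + t * s < x ∧ x ≤ b + t * s + s := by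
        generalize t * s = w at h4 h5 ⊢
        omega
      exact ⟨hmem2, hxB⟩
    calc ((Finset.Ioc b (b + L)).filter (· ∈ B)).card
        ≤ ((Finset.range m).biUnion
            (fun t => (Finset.Ioc (b + t * s) (b + t * s + s)).filter (· ∈ B))).card :=
          Finset.card_le_card hsub
      _ ≤ ∑ t ∈ Finset.range m, ((Finset.Ioc (b + t * s) (b + t * s + s)).filter (· ∈ B)).card :=
          Finset.card_biUnion_le
      _ = ∑ t ∈ Finset.range m, cnt B (b + t * s) s := by
          refine Finset.sum_congr rfl fun t _ => (cnt_eq B (b + t * s) s).symm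
  have hne : (Finset.range m).Nonempty := ⟨0, Finset.mem_range.2 hm⟩
  have hsum : ∑ _t ∈ Finset.range m, cnt B b L ≤
      ∑ t ∈ Finset.range m, m * cnt B (b + t * s) s := by
    rw [Finset.sum_const, Finset.card_range, ← Finset.mul_sum]
    calc m * cnt B b L ≤ m * ∑ t ∈ Finset.range m, cnt B (b + t * s) s :=
      Nat.mul_le_mul_left m cover
    _ = _ := rfl
  obtain ⟨t, htm, ht⟩ := Finset.exists_le_of_sum_le hne hsum
  exact ⟨t, Finset.mem_range.1 htm, ht⟩

/-! ### The inner limsup -/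

/-- `inn B s = limsup_k |B ∩ (k, k+s]|`. -/
noncomputable def inn (B : Set ℕ) (s : ℕ) : ℝ :=
  Filter.limsup (fun k : ℕ => (cnt B k s : ℝ)) Filter.atTop

lemma bd_eq (B : Set ℕ) :
    upperBanachDensity B = Filter.limsup (fun s : ℕ => inn B s / s) Filter.atTop := rfl

lemma inn_bddAbove (B : Set ℕ) (s : ℕ) :
    IsBoundedUnder (· ≤ ·) Filter.atTop (fun k : ℕ => (cnt B k s : ℝ)) :=
  Filter.isBoundedUnder_of ⟨(s : ℝ), fun k => Nat.cast_le.2 (cnt_le B k s)⟩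

lemma inn_nonneg (B : Set ℕ) (s : ℕ) : 0 ≤ inn B s :=
  Filter.le_limsup_of_frequently_le
    (Filter.Frequently.of_forall fun k => Nat.cast_nonneg _) (inn_bddAbove B s)

lemma inn_le (B : Set ℕ) (s : ℕ) : inn B s ≤ (s : ℝ) :=
  Filter.limsup_le_of_le
    (Filter.isCoboundedUnder_le_of_le Filter.atTop
      (fun k : ℕ => Nat.cast_nonneg (cnt B k s)))
    (Filter.Eventually.of_forall fun k : ℕ => Nat.cast_le.2 (cnt_le B k s))

lemma inn_div_nonneg (B : Set ℕ) (s : ℕ) : 0 ≤ inn B s / s :=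
  div_nonneg (inn_nonneg B s) (Nat.cast_nonneg s)

lemma inn_div_le_one (B : Set ℕ) (s : ℕ) : inn B s / s ≤ 1 := by
  rcases Nat.eq_zero_or_pos s with hs | hs
  · subst hs; simp
  · rw [div_le_one (by exact_mod_cast hs)]
    exact inn_le B s

lemma upperBanachDensity_le_one (B : Set ℕ) : upperBanachDensity B ≤ 1 := by
  rw [bd_eq]
  exact Filter.limsup_le_of_le
    (Filter.isCoboundedUnder_le_of_le Filter.atTop (fun s : ℕ => inn_div_nonneg B s))
    (Filter.Eventually.of_forall fun s : ℕ => inn_div_le_one B s)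

/-- Monotonicity of the upper Banach density under shifted inclusion: if the
translate `n + C` is contained in `B`, then `Bd C ≤ Bd B`. -/
lemma bd_mono_shift {B C : Set ℕ} (n : ℕ) (h : ∀ m ∈ C, n + m ∈ B) :
    upperBanachDensity C ≤ upperBanachDensity B := by
  have hcnt : ∀ k s : ℕ, cnt C k s ≤ cnt B (k + n) s := by
    intro k s
    have himg : (fun m => n + m) '' (C ∩ Set.Ioc k (k + s)) ⊆ B ∩ Set.Ioc (k + n) (k + n + s) := by
      rintro _ ⟨m, ⟨hmC, hm1, hm2⟩, rfl⟩
      refine ⟨h m hmC, ?_, ?_⟩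
      · show k + n < n + m
        omega
      · show n + m ≤ k + n + s
        omega
    calc cnt C k s = ((fun m => n + m) '' (C ∩ Set.Ioc k (k + s))).ncard :=
          (Set.ncard_image_of_injective _ (add_right_injective n)).symm
      _ ≤ cnt B (k + n) s := Set.ncard_le_ncard himg (cnt_finite B (k + n) s)
  have hinn : ∀ s, inn C s ≤ inn B s := by
    intro s
    rw [inn, inn, Filter.limsup_eq, Filter.limsup_eq]
    apply csInf_le_csInf
    · refine ⟨0, fun a ha => ?_⟩
      simp only [Set.mem_setOf_eq] at ha
      obtain ⟨k, hk⟩ := ha.exists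
      exact le_trans (Nat.cast_nonneg _) hk
    · exact ⟨(s : ℝ), Filter.Eventually.of_forall fun k => Nat.cast_le.2 (cnt_le B k s)⟩
    · intro a ha
      simp only [Set.mem_setOf_eq] at ha ⊢
      rw [Filter.eventually_atTop] at ha ⊢
      obtain ⟨K, hK⟩ := ha
      refine ⟨K, fun k hk => ?_⟩
      calc (cnt C k s : ℝ) ≤ (cnt B (k + n) s : ℝ) := Nat.cast_le.2 (hcnt k s)
        _ ≤ a := hK (k + n) (le_trans hk (Nat.le_add_right _ _))
  rw [bd_eq, bd_eq]
  refine Filter.limsup_le_limsup (Filter.Eventually.of_forall fun s : ℕ => ?_)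
    (Filter.isCoboundedUnder_le_of_le Filter.atTop (fun s : ℕ => inn_div_nonneg C s))
    (Filter.isBoundedUnder_of ⟨1, fun s : ℕ => inn_div_le_one B s⟩)
  rcases Nat.eq_zero_or_pos s with hs | hs
  · subst hs; simp
  · have hs0 : (0 : ℝ) < s := by exact_mod_cast hs
    exact (div_le_div_iff_of_pos_right hs0).2 (hinn s)

/-- The key positivity lemma: if there are arbitrarily long windows, starting arbitrarily
far out, in which `B` has density at least `ε`, then `Bd B > 0`. -/
lemma bd_pos {B : Set ℕ} {a : ℕ → ℕ} (ha : ∀ j, j ≤ a j) {ε : ℝ} (hε : 0 < ε)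
    (hfreq : ∃ᶠ j in Filter.atTop, ε * j ≤ (cnt B (a j) j : ℝ)) :
    0 < upperBanachDensity B := by
  -- Step A: for every s ≥ 1 and every K there is k ≥ K with cnt B k s ≥ ε s / 2
  have stepA : ∀ s : ℕ, 1 ≤ s → ∀ K : ℕ, ∃ k ≥ K, ε * s / 2 ≤ (cnt B k s : ℝ) := by
    intro s hs K
    obtain ⟨j, hjge, hjcnt⟩ := (Filter.frequently_atTop.1 hfreq) (max K s)
    have hjK : K ≤ j := le_trans (le_max_left _ _) hjge
    have hjs : s ≤ j := le_trans (le_max_right _ _) hjge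
    have hs0 : 0 < s := hs
    set m := j / s + 1 with hm
    have hm0 : 0 < m := Nat.succ_pos _
    have hLm : j ≤ m * s := by
      have := Nat.lt_div_mul_add (a := j) hs0
      calc j ≤ j / s * s + s := this.le
        _ = m * s := by rw [hm]; ring
    have hms : m * s ≤ 2 * j := by
      have h1 : j / s * s ≤ j := Nat.div_mul_le_self _ _
      calc m * s = j / s * s + s := by rw [hm]; ring
        _ ≤ j + j := by omega
        _ = 2 * j := by ring
    obtain ⟨t, htm, htcnt⟩ := cnt_chop (B := B) (b := a j) hs0 hm0 hLm
    refine ⟨a j + t * s, le_trans hjK (le_trans (ha j) (Nat.le_add_right _ _)), ?_⟩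
    set c := cnt B (a j + t * s) s with hc
    have h1 : ε * j ≤ (m : ℝ) * c := by
      calc ε * j ≤ (cnt B (a j) j : ℝ) := hjcnt
        _ ≤ ((m * c : ℕ) : ℝ) := Nat.cast_le.2 htcnt
        _ = (m : ℝ) * c := by push_cast; ring
    have h2 : (m : ℝ) * s ≤ 2 * j := by exact_mod_cast hms
    have hm0R : (0 : ℝ) < m := by exact_mod_cast hm0
    rw [div_le_iff₀ (by norm_num : (0:ℝ) < 2)]
    have key : (m : ℝ) * (ε * s) ≤ (m : ℝ) * ((c : ℝ) * 2) := by
      calc (m : ℝ) * (ε * s) = ε * ((m : ℝ) * s) := by ring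
        _ ≤ ε * (2 * j) := by
          exact mul_le_mul_of_nonneg_left h2 hε.le
        _ = 2 * (ε * j) := by ring
        _ ≤ 2 * ((m : ℝ) * c) := by linarith
        _ = (m : ℝ) * ((c : ℝ) * 2) := by ring
    exact le_of_mul_le_mul_left key hm0R
  -- Step B : inn B s ≥ ε s / 2 for s ≥ 1
  have stepB : ∀ s : ℕ, 1 ≤ s → ε * s / 2 ≤ inn B s := by
    intro s hs
    refine Filter.le_limsup_of_frequently_le ?_ (inn_bddAbove B s)
    rw [Filter.frequently_atTop]
    exact fun K => stepA s hs K
  -- Step C : conclude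
  have stepC : ε / 2 ≤ upperBanachDensity B := by
    rw [bd_eq]
    refine Filter.le_limsup_of_frequently_le ?_
      (Filter.isBoundedUnder_of ⟨1, fun s : ℕ => inn_div_le_one B s⟩)
    refine Filter.Eventually.frequently (Filter.eventually_atTop.2 ⟨1, fun s hs => ?_⟩)
    have hs0 : (0 : ℝ) < s := by exact_mod_cast hs
    rw [le_div_iff₀ hs0]
    calc ε / 2 * s = ε * s / 2 := by ring
      _ ≤ inn B s := stepB s hs
  linarith

end DStarAux

/-! ### The main theorem -/

open DStarAux

attribute [local instance] Ultrafilter.add Ultrafilter.addSemigroup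

/-- Every D*-set in `ℕ` is syndetic. -/
theorem DStarSet.syndetic (A : Set ℕ) (hA : DStarSet A) : Syndetic A := by
  by_contra hsyn
  rw [Syndetic] at hsyn
  push_neg at hsyn
  -- Choose for each j a long interval in the complement of A, starting beyond j.
  have hch : ∀ j : ℕ, ∃ b : ℕ, j ≤ b ∧ ∀ k ∈ Set.Ioc b (b + 2 * j), k ∉ A := by
    intro j
    obtain ⟨n, hn⟩ := hsyn (3 * j + 1)
    refine ⟨n + j, Nat.le_add_left _ _, fun k hk hkA => ?_⟩
    obtain ⟨hk1, hk2⟩ := hk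
    exact hn k (by omega) (by omega) hkA
  choose a ha haA using hch
  -- The filter of sets having density 1 along the windows `(a j, a j + j]`.
  set F : Filter ℕ :=
    { sets := {B | ∀ ε : ℝ, 0 < ε → ∀ᶠ j in Filter.atTop, (1 - ε) * j ≤ (cnt B (a j) j : ℝ)}
      univ_sets := by
        intro ε hε
        refine Filter.Eventually.of_forall fun j => ?_
        have : cnt Set.univ (a j) j = j := cnt_full (Set.subset_univ _)
        rw [this]
        nlinarith [Nat.cast_nonneg (α := ℝ) j]
      sets_of_superset := by
        intro B C hB hBC ε hε
        filter_upwards [hB ε hε] with j hj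
        exact le_trans hj (Nat.cast_le.2 (cnt_mono hBC (a j) j))
      inter_sets := by
        intro B C hB hC ε hε
        filter_upwards [hB (ε / 2) (by linarith), hC (ε / 2) (by linarith)] with j hjB hjC
        have h := cnt_inter B C (a j) j
        have h' : (cnt B (a j) j : ℝ) + cnt C (a j) j ≤ (cnt (B ∩ C) (a j) j : ℝ) + j := by
          exact_mod_cast h
        nlinarith [Nat.cast_nonneg (α := ℝ) j] } with hF
  have hFne : F.NeBot := by
    refine Filter.neBot_iff.2 fun hbot => ?_
    have hmem : (∅ : Set ℕ) ∈ F := hbot ▸ Filter.mem_bot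
    have h2 := hmem (1/2) (by norm_num)
    rw [Filter.eventually_atTop] at h2
    obtain ⟨N, hN⟩ := h2
    have := hN (N + 1) (by omega)
    have hcnt : cnt (∅ : Set ℕ) (a (N+1)) (N+1) = 0 := by
      rw [cnt, Set.empty_inter, Set.ncard_empty]
    rw [hcnt] at this
    push_cast at this
    nlinarith
  obtain ⟨p₀, hp₀⟩ := Filter.exists_ultrafilter_le F
  have hp₀mem : ∀ B ∈ F, B ∈ p₀ := fun B hB => hp₀ hB
  -- The subsemigroup of ultrafilters.
  set S : Set (Ultrafilter ℕ) :=
    {p | (∀ B ∈ p, 0 < upperBanachDensity B) ∧ ∀ n : ℕ, {m : ℕ | n + m ∉ A} ∈ p} with hS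
  -- p₀ ∈ S
  have hp₀S : p₀ ∈ S := by
    constructor
    · intro B hB
      have hBc : Bᶜ ∉ F := by
        intro hmem
        exact (Ultrafilter.compl_mem_iff_notMem.1 (hp₀mem _ hmem)) hB
      simp only [hF, Filter.mem_mk, Set.mem_setOf_eq] at hBc
      change ¬ (∀ ε : ℝ, 0 < ε → ∀ᶠ j in Filter.atTop, (1 - ε) * j ≤ (cnt Bᶜ (a j) j : ℝ)) at hBc
      simp only [not_forall, _root_.not_imp] at hBc
      obtain ⟨ε, hε, hfr⟩ := hBc
      rw [Filter.not_eventually] at hfr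
      have hfr' : ∃ᶠ j in Filter.atTop, ε * j ≤ (cnt B (a j) j : ℝ) := by
        refine hfr.mono fun j hj => ?_
        rw [not_le] at hj
        have hadd : (j : ℝ) ≤ (cnt B (a j) j : ℝ) + (cnt Bᶜ (a j) j : ℝ) := by
          exact_mod_cast cnt_add_compl B (a j) j
        nlinarith
      exact bd_pos ha hε hfr'
    · intro n
      refine hp₀mem _ ?_
      simp only [hF, Filter.mem_mk, Set.mem_setOf_eq]
      intro ε hε
      rw [Filter.eventually_atTop]
      refine ⟨n, fun j hj => ?_⟩
      have hsub : Set.Ioc (a j) (a j + j) ⊆ {m : ℕ | n + m ∉ A} := by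
        intro m hm
        obtain ⟨hm1, hm2⟩ := hm
        exact haA j (n + m) ⟨by omega, by omega⟩
      rw [cnt_full hsub]
      nlinarith [Nat.cast_nonneg (α := ℝ) j]
  -- S is closed under addition of ultrafilters
  have hSadd : ∀ p ∈ S, ∀ q ∈ S, p + q ∈ S := by
    intro p hp q hq
    constructor
    · intro B hB
      have hB' : ∀ᶠ n in (p : Filter ℕ), ∀ᶠ m in (q : Filter ℕ), n + m ∈ B :=
        (Ultrafilter.eventually_add p q (· ∈ B)).1 hB
      obtain ⟨n, hn⟩ := hB'.exists
      have hq' : 0 < upperBanachDensity {m : ℕ | n + m ∈ B} := hq.1 _ hn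
      exact lt_of_lt_of_le hq' (bd_mono_shift n fun m hm => hm)
    · intro n
      refine (Ultrafilter.eventually_add p q _).2 ?_
      refine Filter.Eventually.of_forall fun x => ?_
      have h := hq.2 (n + x)
      have hset : {y : ℕ | n + (x + y) ∉ A} = {m : ℕ | n + x + m ∉ A} := by
        ext y; simp [add_assoc]
      rw [Filter.eventually_iff]
      show {y : ℕ | n + (x + y) ∉ A} ∈ (q : Filter ℕ)
      rw [Ultrafilter.mem_coe, hset]
      exact h
  -- S is closed, hence compact
  have hSclosed : IsClosed S := by
    have h1 : IsClosed {p : Ultrafilter ℕ | ∀ B ∈ p, 0 < upperBanachDensity B} := by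
      have : {p : Ultrafilter ℕ | ∀ B ∈ p, 0 < upperBanachDensity B} =
          ⋂ (B : Set ℕ) (_ : ¬ 0 < upperBanachDensity B), {p : Ultrafilter ℕ | B ∈ p}ᶜ := by
        ext p
        simp only [Set.mem_setOf_eq, Set.mem_iInter, Set.mem_compl_iff]
        constructor
        · intro h B hB hBp
          exact hB (h B hBp)
        · intro h B hB
          by_contra hcon
          exact h B hcon hB
      rw [this]
      exact isClosed_iInter fun B => isClosed_iInter fun _ =>
        (ultrafilter_isOpen_basic B).isClosed_compl
    have h2 : IsClosed {p : Ultrafilter ℕ | ∀ n : ℕ, {m : ℕ | n + m ∉ A} ∈ p} := by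
      have : {p : Ultrafilter ℕ | ∀ n : ℕ, {m : ℕ | n + m ∉ A} ∈ p} =
          ⋂ (n : ℕ), {p : Ultrafilter ℕ | {m : ℕ | n + m ∉ A} ∈ p} := by
        ext p; simp
      rw [this]
      exact isClosed_iInter fun n => ultrafilter_isClosed_basic _
    exact h1.inter h2
  -- Ellis' lemma: there is an idempotent in S
  obtain ⟨p, hpS, hpp⟩ := exists_idempotent_in_compact_add_subsemigroup
    Ultrafilter.continuous_add_left S ⟨p₀, hp₀S⟩ hSclosed.isCompact hSadd
  have hidem : IsIdempotentUF p := by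
    intro B
    constructor
    · intro hB
      rw [← hpp] at hB
      exact (Ultrafilter.eventually_add p p (· ∈ B)).1 hB
    · intro hB
      rw [← hpp]
      exact (Ultrafilter.eventually_add p p (· ∈ B)).2 hB
  have hAp : A ∈ p := hA p hidem hpS.1
  have hAc : {m : ℕ | 0 + m ∉ A} ∈ p := hpS.2 0
  have hAc' : Aᶜ ∈ p := by
    have hset : {m : ℕ | 0 + m ∉ A} = Aᶜ := by ext m; simp [Set.mem_compl_iff]
    rwa [hset] at hAc
  exact (Ultrafilter.compl_mem_iff_notMem.1 hAc') hAp
end
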